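/- (H-step lookahead policy bound.) In a finite discounted MDP, let M̂ be an approximate transition model with D_TV(p(·|s,a), M̂(·|s,a)) ≤ ε_m for all (s,a) ∈ S×A, let V̂ : S → ℝ satisfy max_{s∈S} |V*(s) − V̂(s)| ≤ ε_v, let 0 ≤ r(s,a) ≤ Rmax for all (s,a), and let 0 ≤ V̂(s) ≤ Vmax for all s. Fix a horizon H ≥ 1 and let W : S → ℝ be the value of the H-step lookahead policy π_{H,V̂} (for any choice of maximizers π^s). Then for every state s0, V*(s0) − W(s0) ≤ (2/(1−γ^H))·[C(ε_m,H,γ) + γ^H·ε_v], where C(ε_m,H,γ) = Rmax·Σ_{t=0}^{H−1} γ^t·t·ε_m + γ^H·H·ε_m·Vmax. -/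

import Mathlib

/-!
Write `L_N(V)(π, s)` for the `H`-step lookahead objective and `C` for the model term of the
bound. After `t` steps the state distributions under `p` and `M̂` are at total variation at most
`t εm`, so `|L_p(V̂) - L_M̂(V̂)| ≤ C` for every policy, and changing the terminal value from `V*` to
`V̂` moves `L_p` by at most `γ^H εv`. By the `H`-step Bellman equation every policy has value at
most `L_p(V*)(π, s)`, and since `σ s` maximizes `L_M̂(V̂)`, this gives
`V*(s) ≤ L_p(V*)(σ s, s) + 2 (C + γ^H εv)`. Subtracting the fixed-point equation of `W`, the
largest gap `D = max_s (V*(s) - W(s))` satisfies `D ≤ 2 (C + γ^H εv) + γ^H D`.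
-/

/-- State distribution at time `t` of a (possibly non-stationary) deterministic policy `π`
started from `s0`, under transition model `N`. -/
noncomputable def stateDist {S A : Type*} [Fintype S] [DecidableEq S]
    (N : S → A → S → ℝ) (π : ℕ → S → A) (s0 : S) : ℕ → S → ℝ
  | 0 => fun s => if s = s0 then 1 else 0
  | t + 1 => fun s' => ∑ s : S, stateDist N π s0 t s * N s (π t s) s'

/-- Discounted value of a (possibly non-stationary) deterministic policy. -/
noncomputable def value {S A : Type*} [Fintype S] [DecidableEq S]
    (p : S → A → S → ℝ) (r : S → A → ℝ) (γ : ℝ) (π : ℕ → S → A) (s0 : S) : ℝ :=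
  ∑' t : ℕ, γ ^ t * ∑ s : S, stateDist p π s0 t s * r s (π t s)

/-- Optimal value function: supremum of values over all deterministic policies. -/
noncomputable def vStar {S A : Type*} [Fintype S] [DecidableEq S]
    (p : S → A → S → ℝ) (r : S → A → ℝ) (γ : ℝ) (s0 : S) : ℝ :=
  ⨆ π : ℕ → S → A, value p r γ π s0

/-- H-step lookahead objective of an H-step policy `π` (only its first `H` maps are used),
under transition model `N`, with terminal value function `Vhat`. -/
noncomputable def lookahead {S A : Type*} [Fintype S] [DecidableEq S]
    (N : S → A → S → ℝ) (r : S → A → ℝ) (γ : ℝ) (Vhat : S → ℝ) (H : ℕ)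
    (π : ℕ → S → A) (s : S) : ℝ :=
  (∑ t ∈ Finset.range H, γ ^ t * ∑ s' : S, stateDist N π s t s' * r s' (π t s')) +
    γ ^ H * ∑ s' : S, stateDist N π s H s' * Vhat s'

open Finset

section ProbabilityVector

variable {ι : Type*} [Fintype ι] {d : ι → ℝ}

lemma sum_mul_le_of_le (hd0 : ∀ i, 0 ≤ d i) (hd1 : ∑ i, d i = 1) {f : ι → ℝ} {c : ℝ}
    (hf : ∀ i, f i ≤ c) : ∑ i, d i * f i ≤ c :=
  calc ∑ i, d i * f i ≤ ∑ i, d i * c :=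
        sum_le_sum fun i _ => mul_le_mul_of_nonneg_left (hf i) (hd0 i)
    _ = c := by rw [← sum_mul, hd1, one_mul]

lemma abs_sum_mul_le_of_abs_le (hd0 : ∀ i, 0 ≤ d i) (hd1 : ∑ i, d i = 1) {f : ι → ℝ} {c : ℝ}
    (hf : ∀ i, |f i| ≤ c) : |∑ i, d i * f i| ≤ c := by
  have hneg := sum_mul_le_of_le hd0 hd1 fun i => (neg_le_abs (f i)).trans (hf i)
  simp only [mul_neg, sum_neg_distrib] at hneg
  exact abs_le.2 ⟨by linarith, sum_mul_le_of_le hd0 hd1 fun i => (le_abs_self (f i)).trans (hf i)⟩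

/-- `μ - ν` has total mass zero, so `f` may be centred at `B / 2`. -/
lemma abs_sum_sub_mul_le {μ ν f : ι → ℝ} {B : ℝ} (hμν : ∑ i, μ i = ∑ i, ν i)
    (hf0 : ∀ i, 0 ≤ f i) (hfB : ∀ i, f i ≤ B) :
    |∑ i, (μ i - ν i) * f i| ≤ B * ((1 / 2) * ∑ i, |μ i - ν i|) := by
  have hcenter : ∑ i, (μ i - ν i) * f i = ∑ i, (μ i - ν i) * (f i - B / 2) := by
    simp only [mul_sub, sum_sub_distrib, ← sum_mul, hμν, sub_self, zero_mul, sub_zero]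
  rw [hcenter]
  calc |∑ i, (μ i - ν i) * (f i - B / 2)| ≤ ∑ i, |μ i - ν i| * (B / 2) := by
        refine (abs_sum_le_sum_abs _ _).trans (sum_le_sum fun i _ => ?_)
        rw [abs_mul]
        exact mul_le_mul_of_nonneg_left
          (abs_le.2 ⟨by linarith [hf0 i], by linarith [hfB i]⟩) (abs_nonneg _)
    _ = B * ((1 / 2) * ∑ i, |μ i - ν i|) := by rw [← sum_mul]; ring

end ProbabilityVector

section StateDist

variable {S A : Type*} [Fintype S] [DecidableEq S] {N M : S → A → S → ℝ}

lemma stateDist_nonneg (hN0 : ∀ s a s', 0 ≤ N s a s') (π : ℕ → S → A) (s0 : S) (t : ℕ)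
    (s : S) : 0 ≤ stateDist N π s0 t s := by
  induction t generalizing s with
  | zero => simp only [stateDist]; split <;> norm_num
  | succ t ih => exact sum_nonneg fun x _ => mul_nonneg (ih x) (hN0 _ _ _)

lemma sum_stateDist (hN1 : ∀ s a, ∑ s', N s a s' = 1) (π : ℕ → S → A) (s0 : S) (t : ℕ) :
    ∑ s, stateDist N π s0 t s = 1 := by
  induction t with
  | zero => simp [stateDist]
  | succ t ih =>
    simp only [stateDist]
    rw [sum_comm]
    simp [← mul_sum, hN1, ih]

lemma stateDist_add (N : S → A → S → ℝ) (π : ℕ → S → A) (s0 : S) (H k : ℕ) (s : S) :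
    stateDist N π s0 (H + k) s
      = ∑ s', stateDist N π s0 H s' * stateDist N (fun t => π (H + t)) s' k s := by
  induction k generalizing s with
  | zero => simp [stateDist]
  | succ k ih =>
    change ∑ s1, stateDist N π s0 (H + k) s1 * N s1 (π (H + k) s1) s = _
    simp_rw [ih, sum_mul, mul_assoc]
    rw [sum_comm]
    simp_rw [← mul_sum]
    rfl

lemma sum_stateDist_add_mul (N : S → A → S → ℝ) (r : S → A → ℝ) (π : ℕ → S → A) (s0 : S)
    (H i : ℕ) :
    ∑ s, stateDist N π s0 (H + i) s * r s (π (H + i) s)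
      = ∑ s', stateDist N π s0 H s' *
          ∑ s, stateDist N (fun t => π (H + t)) s' i s * r s (π (H + i) s) := by
  simp_rw [stateDist_add, sum_mul, mul_sum]
  rw [sum_comm]
  simp_rw [mul_assoc]

lemma tv_stateDist_le (hN0 : ∀ s a s', 0 ≤ N s a s') (hN1 : ∀ s a, ∑ s', N s a s' = 1)
    (hM0 : ∀ s a s', 0 ≤ M s a s') (hM1 : ∀ s a, ∑ s', M s a s' = 1) {εm : ℝ}
    (hTV : ∀ s a, (1 / 2) * ∑ s', |N s a s' - M s a s'| ≤ εm)
    (π : ℕ → S → A) (s0 : S) (t : ℕ) :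
    (1 / 2) * ∑ s, |stateDist N π s0 t s - stateDist M π s0 t s| ≤ t * εm := by
  induction t with
  | zero => simp [stateDist]
  | succ t ih =>
    set dN := stateDist N π s0 t
    set dM := stateDist M π s0 t
    have hsplit : ∀ s', stateDist N π s0 (t + 1) s' - stateDist M π s0 (t + 1) s'
        = ∑ s, (dN s * (N s (π t s) s' - M s (π t s) s') + (dN s - dM s) * M s (π t s) s') :=
      fun s' => by
        change ∑ s, dN s * _ - ∑ s, dM s * _ = _
        rw [← sum_sub_distrib]
        exact sum_congr rfl fun s _ => by ring
    calc (1 / 2) * ∑ s', |stateDist N π s0 (t + 1) s' - stateDist M π s0 (t + 1) s'|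
        ≤ (1 / 2) * ∑ s', ∑ s, (dN s * |N s (π t s) s' - M s (π t s) s'|
            + |dN s - dM s| * M s (π t s) s') := by
          gcongr with s'
          rw [hsplit]
          refine (abs_sum_le_sum_abs _ _).trans (sum_le_sum fun s _ => (abs_add_le _ _).trans ?_)
          rw [abs_mul, abs_mul, abs_of_nonneg (stateDist_nonneg hN0 π s0 t s),
            abs_of_nonneg (hM0 _ _ _)]
      _ = ∑ s, dN s * ((1 / 2) * ∑ s', |N s (π t s) s' - M s (π t s) s'|)
            + (1 / 2) * ∑ s, |dN s - dM s| := by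
          rw [sum_comm]
          simp only [sum_add_distrib, ← mul_sum, hM1, mul_one]
          rw [mul_add, mul_sum]
          congr 1
          exact sum_congr rfl fun s _ => by ring
      _ ≤ εm + t * εm := by
          gcongr
          exact sum_mul_le_of_le (stateDist_nonneg hN0 π s0 t) (sum_stateDist hN1 π s0 t)
            fun s => hTV s (π t s)
      _ = (t + 1 : ℕ) * εm := by push_cast; ring

lemma abs_sum_stateDist_sub_mul_le (hN0 : ∀ s a s', 0 ≤ N s a s')
    (hN1 : ∀ s a, ∑ s', N s a s' = 1) (hM0 : ∀ s a s', 0 ≤ M s a s')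
    (hM1 : ∀ s a, ∑ s', M s a s' = 1) {εm : ℝ}
    (hTV : ∀ s a, (1 / 2) * ∑ s', |N s a s' - M s a s'| ≤ εm)
    (π : ℕ → S → A) (s0 : S) (t : ℕ) {f : S → ℝ} {B : ℝ} (hf0 : ∀ s, 0 ≤ f s)
    (hfB : ∀ s, f s ≤ B) :
    |∑ s, (stateDist N π s0 t s - stateDist M π s0 t s) * f s| ≤ B * (t * εm) :=
  (abs_sum_sub_mul_le (by rw [sum_stateDist hN1, sum_stateDist hM1]) hf0 hfB).trans
    (mul_le_mul_of_nonneg_left (tv_stateDist_le hN0 hN1 hM0 hM1 hTV π s0 t)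
      ((hf0 s0).trans (hfB s0)))

end StateDist

section Value

variable {S A : Type*} [Fintype S] [DecidableEq S] {N : S → A → S → ℝ} {r : S → A → ℝ}
  {R γ : ℝ}

lemma abs_discounted_reward_le (hN0 : ∀ s a s', 0 ≤ N s a s') (hN1 : ∀ s a, ∑ s', N s a s' = 1)
    (hr : ∀ s a, |r s a| ≤ R) (hγ0 : 0 ≤ γ) (π : ℕ → S → A) (s0 : S) (t : ℕ) :
    |γ ^ t * ∑ s, stateDist N π s0 t s * r s (π t s)| ≤ R * γ ^ t := by
  rw [abs_mul, abs_of_nonneg (pow_nonneg hγ0 t), mul_comm]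
  exact mul_le_mul_of_nonneg_right
    (abs_sum_mul_le_of_abs_le (stateDist_nonneg hN0 π s0 t) (sum_stateDist hN1 π s0 t)
      fun s => hr s (π t s)) (pow_nonneg hγ0 t)

lemma summable_discounted_reward (hN0 : ∀ s a s', 0 ≤ N s a s')
    (hN1 : ∀ s a, ∑ s', N s a s' = 1) (hr : ∀ s a, |r s a| ≤ R) (hγ0 : 0 ≤ γ) (hγ1 : γ < 1)
    (π : ℕ → S → A) (s0 : S) :
    Summable fun t => γ ^ t * ∑ s, stateDist N π s0 t s * r s (π t s) :=
  ((summable_geometric_of_lt_one hγ0 hγ1).mul_left R).of_norm_bounded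
    (abs_discounted_reward_le hN0 hN1 hr hγ0 π s0)

lemma bddAbove_range_value (hN0 : ∀ s a s', 0 ≤ N s a s') (hN1 : ∀ s a, ∑ s', N s a s' = 1)
    (hr : ∀ s a, |r s a| ≤ R) (hγ0 : 0 ≤ γ) (hγ1 : γ < 1) (s0 : S) :
    BddAbove (Set.range fun π : ℕ → S → A => value N r γ π s0) := by
  refine ⟨∑' t : ℕ, R * γ ^ t, ?_⟩
  rintro _ ⟨π, rfl⟩
  exact (summable_discounted_reward hN0 hN1 hr hγ0 hγ1 π s0).tsum_le_tsum
    (fun t => (le_abs_self _).trans (abs_discounted_reward_le hN0 hN1 hr hγ0 π s0 t))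
    ((summable_geometric_of_lt_one hγ0 hγ1).mul_left R)

lemma value_eq_lookahead (hN0 : ∀ s a s', 0 ≤ N s a s') (hN1 : ∀ s a, ∑ s', N s a s' = 1)
    (hr : ∀ s a, |r s a| ≤ R) (hγ0 : 0 ≤ γ) (hγ1 : γ < 1) (H : ℕ) (π : ℕ → S → A) (s0 : S) :
    value N r γ π s0 = lookahead N r γ (value N r γ fun t => π (H + t)) H π s0 := by
  have hsum := summable_discounted_reward hN0 hN1 hr hγ0 hγ1
  rw [value, ← (hsum π s0).sum_add_tsum_nat_add H, lookahead]
  congr 1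
  calc ∑' i, γ ^ (i + H) * ∑ s, stateDist N π s0 (i + H) s * r s (π (i + H) s)
      = ∑' i, ∑ s', stateDist N π s0 H s' * (γ ^ H *
          (γ ^ i * ∑ s, stateDist N (fun t => π (H + t)) s' i s * r s (π (H + i) s))) := by
        refine tsum_congr fun i => ?_
        rw [add_comm i H, sum_stateDist_add_mul, mul_sum, pow_add]
        exact sum_congr rfl fun s' _ => by ring
    _ = ∑ s', ∑' i, stateDist N π s0 H s' * (γ ^ H *
          (γ ^ i * ∑ s, stateDist N (fun t => π (H + t)) s' i s * r s (π (H + i) s))) :=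
        Summable.tsum_finsetSum fun s' _ =>
          ((hsum (fun t => π (H + t)) s').mul_left _).mul_left _
    _ = γ ^ H * ∑ s', stateDist N π s0 H s' * value N r γ (fun t => π (H + t)) s' := by
        rw [mul_sum]
        exact sum_congr rfl fun s' _ => by rw [tsum_mul_left, tsum_mul_left, value]; ring

end Value

section Lookahead

variable {S A : Type*} [Fintype S] [DecidableEq S] {N M : S → A → S → ℝ} {r : S → A → ℝ}
  {γ : ℝ}

lemma lookahead_le_lookahead_add (hN0 : ∀ s a s', 0 ≤ N s a s')
    (hN1 : ∀ s a, ∑ s', N s a s' = 1) (hγ0 : 0 ≤ γ) {V₁ V₂ : S → ℝ} {c : ℝ}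
    (hV : ∀ s, V₁ s ≤ V₂ s + c) (H : ℕ) (π : ℕ → S → A) (s : S) :
    lookahead N r γ V₁ H π s ≤ lookahead N r γ V₂ H π s + γ ^ H * c := by
  have h := sum_mul_le_of_le (stateDist_nonneg hN0 π s H) (sum_stateDist hN1 π s H)
    (f := fun s' => V₁ s' - V₂ s') (c := c) fun s' => by linarith [hV s']
  have h' := mul_le_mul_of_nonneg_left h (pow_nonneg hγ0 H)
  simp only [mul_sub, sum_sub_distrib] at h'
  simp only [lookahead]
  linarith

lemma abs_lookahead_sub_lookahead_le (hN0 : ∀ s a s', 0 ≤ N s a s')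
    (hN1 : ∀ s a, ∑ s', N s a s' = 1) (hM0 : ∀ s a s', 0 ≤ M s a s')
    (hM1 : ∀ s a, ∑ s', M s a s' = 1) {R Vmax εm : ℝ} {V : S → ℝ}
    (hr0 : ∀ s a, 0 ≤ r s a) (hrR : ∀ s a, r s a ≤ R) (hV0 : ∀ s, 0 ≤ V s)
    (hVmax : ∀ s, V s ≤ Vmax) (hγ0 : 0 ≤ γ)
    (hTV : ∀ s a, (1 / 2) * ∑ s', |N s a s' - M s a s'| ≤ εm)
    (H : ℕ) (π : ℕ → S → A) (s : S) :
    |lookahead N r γ V H π s - lookahead M r γ V H π s|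
      ≤ R * ∑ t ∈ range H, γ ^ t * (t : ℝ) * εm + γ ^ H * (H : ℝ) * εm * Vmax := by
  have hsplit : lookahead N r γ V H π s - lookahead M r γ V H π s
      = ∑ t ∈ range H, γ ^ t *
          ∑ s', (stateDist N π s t s' - stateDist M π s t s') * r s' (π t s')
        + γ ^ H * ∑ s', (stateDist N π s H s' - stateDist M π s H s') * V s' := by
    simp only [lookahead, sub_mul, sum_sub_distrib, mul_sub]
    ring
  rw [hsplit]
  refine (abs_add_le _ _).trans (add_le_add ?_ ?_)
  · rw [mul_sum]
    refine (abs_sum_le_sum_abs _ _).trans (sum_le_sum fun t _ => ?_)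
    rw [abs_mul, abs_of_nonneg (pow_nonneg hγ0 t)]
    calc _ ≤ γ ^ t * (R * (t * εm)) :=
          mul_le_mul_of_nonneg_left (abs_sum_stateDist_sub_mul_le hN0 hN1 hM0 hM1 hTV π s t
            (fun s' => hr0 s' _) fun s' => hrR s' _) (pow_nonneg hγ0 t)
      _ = R * (γ ^ t * t * εm) := by ring
  · rw [abs_mul, abs_of_nonneg (pow_nonneg hγ0 H)]
    calc _ ≤ γ ^ H * (Vmax * (H * εm)) :=
          mul_le_mul_of_nonneg_left
            (abs_sum_stateDist_sub_mul_le hN0 hN1 hM0 hM1 hTV π s H hV0 hVmax) (pow_nonneg hγ0 H)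
      _ = γ ^ H * H * εm * Vmax := by ring

lemma vStar_le_lookahead_vStar_add [Nonempty A] {p Mhat : S → A → S → ℝ}
    (hp0 : ∀ s a s', 0 ≤ p s a s') (hp1 : ∀ s a, ∑ s', p s a s' = 1) {R : ℝ}
    (hr : ∀ s a, |r s a| ≤ R) (hγ0 : 0 ≤ γ) (hγ1 : γ < 1) {Vhat : S → ℝ} {C εv : ℝ} {H : ℕ}
    (hεv : ∀ s, |vStar p r γ s - Vhat s| ≤ εv)
    (hC : ∀ π s, |lookahead p r γ Vhat H π s - lookahead Mhat r γ Vhat H π s| ≤ C)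
    {σ : S → ℕ → S → A}
    (hσ : ∀ s π, lookahead Mhat r γ Vhat H π s ≤ lookahead Mhat r γ Vhat H (σ s) s) (s : S) :
    vStar p r γ s ≤ lookahead p r γ (vStar p r γ) H (σ s) s + 2 * (C + γ ^ H * εv) := by
  have hvStar_le : ∀ s, vStar p r γ s ≤ Vhat s + εv := fun s => by
    linarith [(abs_le.1 (hεv s)).2]
  have hVhat_le : ∀ s, Vhat s ≤ vStar p r γ s + εv := fun s => by
    linarith [(abs_le.1 (hεv s)).1]
  have hvalue_le : ∀ π s, value p r γ π s ≤ vStar p r γ s + 0 := fun π s => by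
    rw [add_zero]; exact le_ciSup (bddAbove_range_value hp0 hp1 hr hγ0 hγ1 s) π
  have hmono {V₁ V₂ : S → ℝ} {c : ℝ} (hV : ∀ s, V₁ s ≤ V₂ s + c) (π : ℕ → S → A) (s : S) :=
    lookahead_le_lookahead_add (r := r) hp0 hp1 hγ0 hV H π s
  refine ciSup_le fun π => ?_
  calc value p r γ π s
      = lookahead p r γ (value p r γ fun t => π (H + t)) H π s :=
        value_eq_lookahead hp0 hp1 hr hγ0 hγ1 H π s
    _ ≤ lookahead p r γ (vStar p r γ) H π s := by
        linarith [hmono (hvalue_le fun t => π (H + t)) π s]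
    _ ≤ lookahead p r γ Vhat H π s + γ ^ H * εv :=
        hmono hvStar_le π s
    _ ≤ lookahead Mhat r γ Vhat H (σ s) s + C + γ ^ H * εv := by
        linarith [(abs_le.1 (hC π s)).2, hσ s π]
    _ ≤ lookahead p r γ Vhat H (σ s) s + 2 * C + γ ^ H * εv := by
        linarith [(abs_le.1 (hC (σ s) s)).1]
    _ ≤ lookahead p r γ (vStar p r γ) H (σ s) s + 2 * (C + γ ^ H * εv) := by
        linarith [hmono hVhat_le (σ s) s]

end Lookahead

theorem h_step_lookahead_bound_general
    {S A : Type*} [Fintype S] [DecidableEq S] [Nonempty S] [Nonempty A]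
    (p Mhat : S → A → S → ℝ) (r : S → A → ℝ) (γ Rmax Vmax εm εv : ℝ) (H : ℕ)
    (hp_nonneg : ∀ s a s', 0 ≤ p s a s')
    (hp_sum : ∀ s a, ∑ s' : S, p s a s' = 1)
    (hM_nonneg : ∀ s a s', 0 ≤ Mhat s a s')
    (hM_sum : ∀ s a, ∑ s' : S, Mhat s a s' = 1)
    (hγ0 : 0 < γ) (hγ1 : γ < 1) (hH : 1 ≤ H)
    (hTV : ∀ s a, (1 / 2) * ∑ s' : S, |p s a s' - Mhat s a s'| ≤ εm)
    (Vhat : S → ℝ)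
    (hεv : ∀ s, |vStar p r γ s - Vhat s| ≤ εv)
    (hr0 : ∀ s a, 0 ≤ r s a) (hrmax : ∀ s a, r s a ≤ Rmax)
    (hV0 : ∀ s, 0 ≤ Vhat s) (hVmax : ∀ s, Vhat s ≤ Vmax)
    -- `W` is the (bounded) value of the H-step lookahead policy: for every state `s`,
    -- `σ s` is a maximizer over H-step policies of the lookahead objective under `Mhat`,
    -- and `W` satisfies the corresponding fixed-point equation under the true model `p`.
    (W : S → ℝ)
    (σ : S → ℕ → S → A)
    (hσmax : ∀ s (π : ℕ → S → A),
      lookahead Mhat r γ Vhat H π s ≤ lookahead Mhat r γ Vhat H (σ s) s)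
    (hW : ∀ s, W s =
      (∑ t ∈ Finset.range H, γ ^ t * ∑ s' : S, stateDist p (σ s) s t s' * r s' (σ s t s')) +
        γ ^ H * ∑ s' : S, stateDist p (σ s) s H s' * W s')
    (s0 : S) :
    vStar p r γ s0 - W s0 ≤
      (2 / (1 - γ ^ H)) *
        ((Rmax * ∑ t ∈ Finset.range H, γ ^ t * (t : ℝ) * εm + γ ^ H * (H : ℝ) * εm * Vmax) +
          γ ^ H * εv) := by
  set C := Rmax * ∑ t ∈ Finset.range H, γ ^ t * (t : ℝ) * εm + γ ^ H * (H : ℝ) * εm * Vmax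
  have hr : ∀ s a, |r s a| ≤ Rmax := fun s a =>
    abs_le.2 ⟨by linarith [hr0 s a, hrmax s a], hrmax s a⟩
  have hgreedy := vStar_le_lookahead_vStar_add hp_nonneg hp_sum hr hγ0.le hγ1 hεv
    (fun π s => abs_lookahead_sub_lookahead_le hp_nonneg hp_sum hM_nonneg hM_sum hr0 hrmax hV0
      hVmax hγ0.le hTV H π s) hσmax
  obtain ⟨sm, hsm⟩ := Finite.exists_max fun s => vStar p r γ s - W s
  set D := vStar p r γ sm - W sm
  have hcontract : D ≤ 2 * (C + γ ^ H * εv) + γ ^ H * D := by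
    have hWsm : W sm = lookahead p r γ W H (σ sm) sm := hW sm
    have := lookahead_le_lookahead_add (r := r) (V₁ := vStar p r γ) (V₂ := W) (c := D)
      hp_nonneg hp_sum hγ0.le (fun s => by linarith [hsm s]) H (σ sm) sm
    linarith [hgreedy sm]
  have hγH : γ ^ H < 1 := pow_lt_one₀ hγ0.le hγ1 (by omega)
  calc vStar p r γ s0 - W s0 ≤ D := hsm s0
    _ ≤ 2 / (1 - γ ^ H) * (C + γ ^ H * εv) := by
      rw [div_mul_eq_mul_div, le_div_iff₀ (by linarith)]
      linarith

/-- Performance bound for the H-step lookahead policy with an approximate model and an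
approximate terminal value function. -/
theorem h_step_lookahead_bound
    {S A : Type*} [Fintype S] [DecidableEq S] [Nonempty S] [Fintype A] [Nonempty A]
    (p Mhat : S → A → S → ℝ) (r : S → A → ℝ) (γ Rmax Vmax εm εv : ℝ) (H : ℕ)
    (hp_nonneg : ∀ s a s', 0 ≤ p s a s')
    (hp_sum : ∀ s a, ∑ s' : S, p s a s' = 1)
    (hM_nonneg : ∀ s a s', 0 ≤ Mhat s a s')
    (hM_sum : ∀ s a, ∑ s' : S, Mhat s a s' = 1)
    (hγ0 : 0 < γ) (hγ1 : γ < 1) (hH : 1 ≤ H)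
    (hTV : ∀ s a, (1 / 2) * ∑ s' : S, |p s a s' - Mhat s a s'| ≤ εm)
    (Vhat : S → ℝ)
    (hεv : ∀ s, |vStar p r γ s - Vhat s| ≤ εv)
    (hr0 : ∀ s a, 0 ≤ r s a) (hrmax : ∀ s a, r s a ≤ Rmax)
    (hV0 : ∀ s, 0 ≤ Vhat s) (hVmax : ∀ s, Vhat s ≤ Vmax)
    -- `W` is the (bounded) value of the H-step lookahead policy: for every state `s`,
    -- `σ s` is a maximizer over H-step policies of the lookahead objective under `Mhat`,
    -- and `W` satisfies the corresponding fixed-point equation under the true model `p`.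
    (W : S → ℝ) (hWbdd : ∃ B, ∀ s, |W s| ≤ B)
    (σ : S → ℕ → S → A)
    (hσmax : ∀ s (π : ℕ → S → A),
      lookahead Mhat r γ Vhat H π s ≤ lookahead Mhat r γ Vhat H (σ s) s)
    (hW : ∀ s, W s =
      (∑ t ∈ Finset.range H, γ ^ t * ∑ s' : S, stateDist p (σ s) s t s' * r s' (σ s t s')) +
        γ ^ H * ∑ s' : S, stateDist p (σ s) s H s' * W s')
    (s0 : S) :
    vStar p r γ s0 - W s0 ≤
      (2 / (1 - γ ^ H)) *
        ((Rmax * ∑ t ∈ Finset.range H, γ ^ t * (t : ℝ) * εm + γ ^ H * (H : ℝ) * εm * Vmax) +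
          γ ^ H * εv) :=
  h_step_lookahead_bound_general p Mhat r γ Rmax Vmax εm εv H hp_nonneg hp_sum hM_nonneg hM_sum hγ0
    hγ1 hH hTV Vhat hεv hr0 hrmax hV0 hVmax W σ hσmax hW s0
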